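/- arXiv:1401.2836 — 5 statements merged into one kernel-verified Lean document; each statement's English description precedes it below -/
import Mathlib

section
/- Let S be a semiring (commutative, possibly without neutral elements) and let a, b ∈ S be such that k·a = l·a + b for some k, l ≥ 1 with k ≠ l. If b has finite order, then a has finite order. -/
/-!
Adjoin a zero to `S`, so that `n·a` becomes the `n`-fold sum `n • a` of an additive commutative
monoid. Multiplying `k • a = l • a + b` by `m` gives `(m * k) • a = (m * l) • a + m • b`; if
`p • b = q • b` with `p ≠ q`, adding the instances `m = q` and `m = p` crosswise cancels the `b`
terms and yields `(q * k + p * l) • a = (q * l + p * k) • a`, two distinct multiples of `a`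
since `(q - p) * (k - l) ≠ 0`. An element with two coinciding multiples has finitely many.
-/

/-- `nmul n a` is the `n`-fold sum `a + ⋯ + a` (for `n ≥ 1`; `nmul 0 a = a` is junk). -/
def nmul {S : Type*} [Add S] (n : ℕ) (a : S) : S :=
  Nat.rec a (fun _ b => b + a) (n - 1)

/-- The set `{n·a : n ≥ 1}`; `a` has finite order iff this set is finite. -/
def addOrbit {S : Type*} [Add S] (a : S) : Set S :=
  {x | ∃ n : ℕ, 1 ≤ n ∧ nmul n a = x}

section AddMonoid

variable {M : Type*} [AddMonoid M]

lemma exists_lt_nsmul_eq_of_nsmul_eq {x : M} {p q : ℕ} (hpq : p < q) (h : p • x = q • x)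
    (n : ℕ) : ∃ r < q, r • x = n • x := by
  induction n using Nat.strong_induction_on with
  | _ n ih =>
    by_cases hn : n < q
    · exact ⟨n, hn, rfl⟩
    · obtain ⟨r, hr, hrx⟩ := ih (n - (q - p)) (by omega)
      refine ⟨r, hr, ?_⟩
      calc r • x = (n - q) • x + p • x := by rw [hrx, ← add_nsmul]; congr 1; omega
        _ = n • x := by rw [h, ← add_nsmul, Nat.sub_add_cancel (not_lt.mp hn)]

lemma finite_range_nsmul_iff (x : M) :
    (Set.range fun n : ℕ => n • x).Finite ↔ ∃ p q : ℕ, p ≠ q ∧ p • x = q • x := by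
  constructor
  · intro hfin
    by_contra! hinj
    exact Set.infinite_range_of_injective (fun p q hpq => by_contra fun hne => hinj p q hne hpq)
      hfin
  · rintro ⟨p, q, hne, h⟩
    wlog hpq : p < q generalizing p q
    · exact this q p hne.symm h.symm (by omega)
    refine ((Set.finite_Iio q).image fun r => r • x).subset ?_
    rintro _ ⟨n, rfl⟩
    exact exists_lt_nsmul_eq_of_nsmul_eq hpq h n

end AddMonoid

lemma nsmul_eq_nsmul_of_nsmul_eq_add {M : Type*} [AddCommMonoid M] {x y : M} {k l p q : ℕ}
    (h : k • x = l • x + y) (hy : p • y = q • y) :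
    (q * k + p * l) • x = (q * l + p * k) • x := by
  have hmul (m : ℕ) : (m * k) • x = (m * l) • x + m • y := by
    rw [mul_nsmul', h, nsmul_add, ← mul_nsmul']
  rw [add_nsmul, add_nsmul, hmul q, ← hy, add_right_comm, add_assoc, ← hmul p]

section AddCommSemigroup

variable {S : Type*} [AddCommSemigroup S]

lemma coe_nmul (a : S) {n : ℕ} (hn : 1 ≤ n) :
    ((nmul n a : S) : WithZero S) = n • (a : WithZero S) := by
  obtain ⟨n, rfl⟩ := Nat.exists_eq_add_of_le' hn
  induction n with
  | zero => exact (one_nsmul _).symm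
  | succ n ih =>
    rw [succ_nsmul, ← ih (by omega), ← WithZero.coe_add]
    rfl

lemma finite_addOrbit_iff (a : S) :
    (addOrbit a).Finite ↔ (Set.range fun n : ℕ => n • (a : WithZero S)).Finite := by
  have hrange : (Set.range fun n : ℕ => n • (a : WithZero S)) =
      insert 0 ((↑) '' addOrbit a) := by
    ext x
    constructor
    · rintro ⟨_ | n, rfl⟩
      · exact Or.inl (zero_nsmul _)
      · exact Or.inr ⟨nmul (n + 1) a, ⟨n + 1, by omega, rfl⟩, coe_nmul a (by omega)⟩
    · rintro (rfl | ⟨_, ⟨n, hn, rfl⟩, rfl⟩)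
      · exact ⟨0, zero_nsmul _⟩
      · exact ⟨n, (coe_nmul a hn).symm⟩
  rw [hrange, Set.finite_insert, Set.finite_image_iff WithZero.coe_injective.injOn]

end AddCommSemigroup

theorem stmt_1_general {S : Type*} [AddCommSemigroup S]
    (a b : S) (k l : ℕ) (hk : 1 ≤ k) (hl : 1 ≤ l) (hkl : k ≠ l)
    (h : nmul k a = nmul l a + b)
    (hb : (addOrbit b).Finite) :
    (addOrbit a).Finite := by
  rw [finite_addOrbit_iff, finite_range_nsmul_iff] at hb ⊢
  obtain ⟨p, q, hpq, hbpq⟩ := hb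
  have hsmul : k • (a : WithZero S) = l • a + b := by
    rw [← coe_nmul a hk, ← coe_nmul a hl, h, WithZero.coe_add]
  refine ⟨q * k + p * l, q * l + p * k, fun heq => ?_, nsmul_eq_nsmul_of_nsmul_eq_add hsmul hbpq⟩
  have hfactor : ((q : ℤ) - p) * ((k : ℤ) - l) = 0 := by
    linear_combination (by exact_mod_cast heq : (q * k + p * l : ℤ) = q * l + p * k)
  rcases mul_eq_zero.mp hfactor with hqp | hkl' <;> omega

theorem stmt_1 {S : Type*} [AddCommSemigroup S] [CommSemigroup S]
    (hdl : ∀ a b c : S, a * (b + c) = a * b + a * c)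
    (hdr : ∀ a b c : S, (a + b) * c = a * c + b * c)
    (a b : S) (k l : ℕ) (hk : 1 ≤ k) (hl : 1 ≤ l) (hkl : k ≠ l)
    (h : nmul k a = nmul l a + b)
    (hb : (addOrbit b).Finite) :
    (addOrbit a).Finite :=
  stmt_1_general a b k l hk hl hkl h hb
end

section
/- Let S be a semiring (commutative, possibly without neutral elements), let w ∈ S, and let M = {n·w : n ≥ 1} ∪ {s·w : s ∈ S} ∪ {n·w + s·w : n ≥ 1, s ∈ S}. If a, b, c ∈ M and m ≥ 1 are such that m·a = m·b and m·c = w, then a = b. -/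
/-- The cyclic subsemimodule `𝒰(S)·w` of `S`. -/
def cyclicMod {S : Type*} [Add S] [Mul S] (w : S) : Set S :=
  {x | ∃ n : ℕ, 1 ≤ n ∧ nmul n w = x} ∪ {x | ∃ s : S, s * w = x} ∪
    {x | ∃ n : ℕ, 1 ≤ n ∧ ∃ s : S, nmul n w + s * w = x}

lemma nmul_succ_succ {S : Type*} [Add S] (n : ℕ) (a : S) :
    nmul (n + 2) a = nmul (n + 1) a + a := rfl

lemma map_nmul_of_map_add {S : Type*} [Add S] {f : S → S} (hf : ∀ u v, f (u + v) = f u + f v)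
    (n : ℕ) (u : S) : f (nmul n u) = nmul n (f u) := by
  induction n with
  | zero => rfl
  | succ n ih =>
    cases n with
    | zero => rfl
    | succ k => rw [nmul_succ_succ, hf, ih, nmul_succ_succ]

lemma nmul_add {S : Type*} [AddCommSemigroup S] (n : ℕ) (x y : S) :
    nmul n (x + y) = nmul n x + nmul n y := by
  induction n with
  | zero => rfl
  | succ n ih =>
    cases n with
    | zero => rfl
    | succ k => rw [nmul_succ_succ, nmul_succ_succ, nmul_succ_succ, ih, add_add_add_comm]

lemma commute_add_of_map_add {S : Type*} [Add S] {f g h : S → S}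
    (hf : ∀ u v, f (u + v) = f u + f v)
    (hg : Function.Commute f g) (hh : Function.Commute f h) :
    Function.Commute f (fun u => g u + h u) := fun u => by
  rw [hf, hg u, hh u]

/-- An endomorphism of `S` as a module over its unitization `𝒰(S)`. -/
structure IsLinearEndo {S : Type*} [Add S] [Mul S] (f : S → S) : Prop where
  map_add : ∀ u v, f (u + v) = f u + f v
  map_mul : ∀ s u, f (s * u) = s * f u

section LinearEndo

variable {S : Type*} [AddCommSemigroup S] [CommSemigroup S]

lemma isLinearEndo_mul (hdl : ∀ a b c : S, a * (b + c) = a * b + a * c) (s : S) :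
    IsLinearEndo (s * ·) :=
  ⟨hdl s, fun t u => mul_left_comm s t u⟩

lemma isLinearEndo_nmul (hdl : ∀ a b c : S, a * (b + c) = a * b + a * c) (n : ℕ) :
    IsLinearEndo (nmul n : S → S) :=
  ⟨nmul_add n, fun s u => (map_nmul_of_map_add (isLinearEndo_mul hdl s).map_add n u).symm⟩

lemma IsLinearEndo.add (hdl : ∀ a b c : S, a * (b + c) = a * b + a * c)
    {f g : S → S} (hf : IsLinearEndo f) (hg : IsLinearEndo g) :
    IsLinearEndo (fun u => f u + g u) :=
  ⟨fun u v => by rw [hf.map_add, hg.map_add, add_add_add_comm],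
    fun s u => by rw [hf.map_mul, hg.map_mul, hdl]⟩

lemma exists_isLinearEndo_of_mem_cyclicMod
    (hdl : ∀ a b c : S, a * (b + c) = a * b + a * c) {w x : S} (hx : x ∈ cyclicMod w) :
    ∃ f : S → S, IsLinearEndo f ∧ (∀ g, IsLinearEndo g → Function.Commute g f) ∧ f w = x := by
  have hnmul (n : ℕ) : ∀ g : S → S, IsLinearEndo g → Function.Commute g (nmul n) :=
    fun g hg => map_nmul_of_map_add hg.map_add n
  have hmul (s : S) : ∀ g : S → S, IsLinearEndo g → Function.Commute g (s * ·) :=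
    fun g hg => hg.map_mul s
  rcases hx with (⟨n, -, rfl⟩ | ⟨s, rfl⟩) | ⟨n, -, s, rfl⟩
  · exact ⟨nmul n, isLinearEndo_nmul hdl n, hnmul n, rfl⟩
  · exact ⟨(s * ·), isLinearEndo_mul hdl s, hmul s, rfl⟩
  · exact ⟨fun u => nmul n u + s * u, (isLinearEndo_nmul hdl n).add hdl (isLinearEndo_mul hdl s),
      fun g hg => commute_add_of_map_add hg.map_add (hnmul n g hg) (hmul s g hg), rfl⟩

lemma eq_nmul_of_mem_cyclicMod (hdl : ∀ a b c : S, a * (b + c) = a * b + a * c)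
    {w c x : S} {f : S → S} (hf : IsLinearEndo f) (hfw : f w = c)
    {m : ℕ} (hcw : nmul m c = w) (hx : x ∈ cyclicMod w) : x = nmul m (f x) := by
  obtain ⟨g, hg, hgf, rfl⟩ := exists_isLinearEndo_of_mem_cyclicMod hdl hx
  calc g w = g (nmul m (f w)) := by rw [hfw, hcw]
    _ = nmul m (g (f w)) := map_nmul_of_map_add hg.map_add m _
    _ = nmul m (f (g w)) := by rw [hgf f hf w]

end LinearEndo

theorem stmt_3_general {S : Type*} [AddCommSemigroup S] [CommSemigroup S]
    (hdl : ∀ a b c : S, a * (b + c) = a * b + a * c)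
    (w a b c : S) (ha : a ∈ cyclicMod w) (hb : b ∈ cyclicMod w) (hc : c ∈ cyclicMod w)
    (m : ℕ)
    (hab : nmul m a = nmul m b) (hcw : nmul m c = w) :
    a = b := by
  obtain ⟨γ, hγ, -, hγw⟩ := exists_isLinearEndo_of_mem_cyclicMod hdl hc
  calc a = nmul m (γ a) := eq_nmul_of_mem_cyclicMod hdl hγ hγw hcw ha
    _ = γ (nmul m a) := (map_nmul_of_map_add hγ.map_add m a).symm
    _ = γ (nmul m b) := by rw [hab]
    _ = nmul m (γ b) := map_nmul_of_map_add hγ.map_add m b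
    _ = b := (eq_nmul_of_mem_cyclicMod hdl hγ hγw hcw hb).symm

theorem stmt_3 {S : Type*} [AddCommSemigroup S] [CommSemigroup S]
    (hdl : ∀ a b c : S, a * (b + c) = a * b + a * c)
    (hdr : ∀ a b c : S, (a + b) * c = a * c + b * c)
    (w a b c : S) (ha : a ∈ cyclicMod w) (hb : b ∈ cyclicMod w) (hc : c ∈ cyclicMod w)
    (m : ℕ) (hm : 1 ≤ m)
    (hab : nmul m a = nmul m b) (hcw : nmul m c = w) :
    a = b :=
  stmt_3_general hdl w a b c ha hb hc m hab hcw
end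

section
/- Let S be a semiring (commutative, possibly without neutral elements) that is additively uniquely divisible and torsion (every element has finite order). Then S is additively idempotent. -/
/-! If `m·a = (m + k)·a`, then `m·a` absorbs every multiple of `k·a`, in particular
`m·(k·a)`, so `m·(a + k·a) = m·a` and dividing by `m` gives `a + k·a = a`. Then `k·a` is
absorbed by every multiple of `a`, so `k·(a + a) = k·a + k·a = k·a`, and dividing by `k`
gives `a + a = a`. -/

section nmul

variable {S : Type*}

@[simp]
lemma nmul_one [Add S] (a : S) : nmul 1 a = a := rfl

lemma nmul_succ [Add S] {n : ℕ} (hn : 1 ≤ n) (a : S) : nmul (n + 1) a = nmul n a + a := by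
  obtain ⟨m, rfl⟩ : ∃ m, n = m + 1 := ⟨n - 1, by omega⟩
  rfl

variable [AddCommSemigroup S]

lemma add_nmul {m n : ℕ} (hm : 1 ≤ m) (hn : 1 ≤ n) (a : S) :
    nmul (m + n) a = nmul m a + nmul n a := by
  induction n, hn using Nat.le_induction with
  | base => simp [nmul_succ hm]
  | succ n hn ih =>
    rw [← add_assoc, nmul_succ (by omega), ih, nmul_succ hn, add_assoc]

lemma nmul_add_s5 {n : ℕ} (hn : 1 ≤ n) (a b : S) : nmul n (a + b) = nmul n a + nmul n b := by
  induction n, hn using Nat.le_induction with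
  | base => simp
  | succ n hn ih =>
    rw [nmul_succ hn, nmul_succ hn, nmul_succ hn, ih]
    ac_rfl

lemma add_nmul_eq_self_of_add_eq_self {x c : S} (h : x + c = x) {t : ℕ} (ht : 1 ≤ t) :
    x + nmul t c = x := by
  induction t, ht using Nat.le_induction with
  | base => simpa using h
  | succ t ht ih => rw [nmul_succ ht, ← add_assoc, ih, h]

lemma nmul_add_eq_self_of_add_eq_self {a c : S} (h : a + c = a) {j : ℕ} (hj : 1 ≤ j) :
    nmul j a + c = nmul j a := by
  induction j, hj using Nat.le_induction with
  | base => simpa using h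
  | succ j hj ih => rw [nmul_succ hj, add_right_comm, ih]

lemma add_self_of_nmul_eq_nmul (hinj : ∀ n, 1 ≤ n → Function.Injective (nmul n : S → S))
    {a : S} {m n : ℕ} (hm : 1 ≤ m) (hmn : m < n) (h : nmul m a = nmul n a) : a + a = a := by
  obtain ⟨k, rfl⟩ : ∃ k, n = m + k := ⟨n - m, by omega⟩
  have hk : 1 ≤ k := by omega
  have hperiod : nmul m a + nmul k a = nmul m a := by rw [← add_nmul hm hk, ← h]
  have hak : a + nmul k a = a := hinj m hm <| by
    rw [nmul_add_s5 hm, add_nmul_eq_self_of_add_eq_self hperiod hm]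
  exact hinj k hk <| by rw [nmul_add_s5 hk, nmul_add_eq_self_of_add_eq_self hak hk]

end nmul

theorem stmt_5_general {S : Type*} [AddCommSemigroup S]
    (hudiv : ∀ a : S, ∀ n : ℕ, 1 ≤ n → ∃! b : S, nmul n b = a)
    (htor : ∀ a : S, ∃ m n : ℕ, 1 ≤ m ∧ 1 ≤ n ∧ m ≠ n ∧ nmul m a = nmul n a) :
    ∀ a : S, a + a = a := by
  have hinj : ∀ n, 1 ≤ n → Function.Injective (nmul n : S → S) :=
    fun n hn _ _ hxy => (hudiv _ n hn).unique hxy rfl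
  intro a
  obtain ⟨m, n, hm, hn, hmn, h⟩ := htor a
  rcases hmn.lt_or_gt with hlt | hgt
  · exact add_self_of_nmul_eq_nmul hinj hm hlt h
  · exact add_self_of_nmul_eq_nmul hinj hn hgt h.symm

theorem stmt_5 {S : Type*} [AddCommSemigroup S] [CommSemigroup S]
    (hdl : ∀ a b c : S, a * (b + c) = a * b + a * c)
    (hdr : ∀ a b c : S, (a + b) * c = a * c + b * c)
    (hudiv : ∀ a : S, ∀ n : ℕ, 1 ≤ n → ∃! b : S, nmul n b = a)
    (htor : ∀ a : S, ∃ m n : ℕ, 1 ≤ m ∧ 1 ≤ n ∧ m ≠ n ∧ nmul m a = nmul n a) :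
    ∀ a : S, a + a = a :=
  stmt_5_general hudiv htor
end

section
/- Let S be an additively divisible semiring (commutative) possessing a multiplicative identity 1. Then S is additively uniquely divisible: for every a ∈ S and n ≥ 1 there exists exactly one b ∈ S with n·b = a. -/
/-! If `n • e = 1`, then multiplication by `e` undoes `n • -`: from `n • c = a` we get
`c = c * (n • e) = (n • c) * e = a * e`, so `c` is determined by `a`. -/

section

variable {S : Type*} [AddCommSemigroup S] [CommMonoid S]

lemma mul_nmul (hdl : ∀ a b c : S, a * (b + c) = a * b + a * c) (a b : S) (n : ℕ) :
    a * nmul n b = nmul n (a * b) := by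
  unfold nmul
  induction n - 1 with
  | zero => rfl
  | succ k ih => simp only [hdl, ih]

lemma nmul_mul (hdl : ∀ a b c : S, a * (b + c) = a * b + a * c) (a b : S) (n : ℕ) :
    nmul n a * b = nmul n (a * b) := by
  rw [mul_comm, mul_nmul hdl, mul_comm]

lemma eq_mul_of_nmul_eq (hdl : ∀ a b c : S, a * (b + c) = a * b + a * c) {n : ℕ} {a c e : S}
    (he : nmul n e = 1) (hc : nmul n c = a) : c = a * e :=
  calc c = c * nmul n e := by rw [he, mul_one]
    _ = nmul n c * e := by rw [mul_nmul hdl, nmul_mul hdl]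
    _ = a * e := by rw [hc]

lemma nmul_injective_of_nmul_eq_one (hdl : ∀ a b c : S, a * (b + c) = a * b + a * c) {n : ℕ}
    {e : S} (he : nmul n e = 1) : Function.Injective (nmul n : S → S) := fun _ _ h =>
  (eq_mul_of_nmul_eq hdl he h).trans (eq_mul_of_nmul_eq hdl he rfl).symm

end

theorem stmt_11_general {S : Type*} [AddCommSemigroup S] [CommMonoid S]
    (hdl : ∀ a b c : S, a * (b + c) = a * b + a * c)
    (hdiv : ∀ a : S, ∀ n : ℕ, 1 ≤ n → ∃ b : S, nmul n b = a) :
    ∀ a : S, ∀ n : ℕ, 1 ≤ n → ∃! b : S, nmul n b = a := by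
  intro a n hn
  obtain ⟨b, hb⟩ := hdiv a n hn
  obtain ⟨e, he⟩ := hdiv 1 n hn
  exact ⟨b, hb, fun c hc => nmul_injective_of_nmul_eq_one hdl he (hc.trans hb.symm)⟩

theorem stmt_11 {S : Type*} [AddCommSemigroup S] [CommMonoid S]
    (hdl : ∀ a b c : S, a * (b + c) = a * b + a * c)
    (hdr : ∀ a b c : S, (a + b) * c = a * c + b * c)
    (hdiv : ∀ a : S, ∀ n : ℕ, 1 ≤ n → ∃ b : S, nmul n b = a) :
    ∀ a : S, ∀ n : ℕ, 1 ≤ n → ∃! b : S, nmul n b = a :=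
  stmt_11_general hdl hdiv
end

section
/- Let S be a semiring (commutative, possibly without neutral elements) generated by a single element w. If u ∈ S satisfies w = w·u, then u is a multiplicative identity of S: u·x = x for every x ∈ S. -/
/-- The subsemiring generated by `A`: the smallest subset of `S` containing `A`
and closed under addition and multiplication. -/
def genClosure {S : Type*} [Add S] [Mul S] (A : Set S) : Set S :=
  ⋂₀ {T : Set S | A ⊆ T ∧ (∀ x ∈ T, ∀ y ∈ T, x + y ∈ T) ∧ (∀ x ∈ T, ∀ y ∈ T, x * y ∈ T)}

theorem genClosure_subset {S : Type*} [Add S] [Mul S] {A T : Set S} (hA : A ⊆ T)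
    (hadd : ∀ x ∈ T, ∀ y ∈ T, x + y ∈ T) (hmul : ∀ x ∈ T, ∀ y ∈ T, x * y ∈ T) :
    genClosure A ⊆ T :=
  Set.sInter_subset_of_mem ⟨hA, hadd, hmul⟩

theorem genClosure_singleton_subset_fixed {S : Type*} [Add S] [Semigroup S]
    (hdl : ∀ a b c : S, a * (b + c) = a * b + a * c) {w u : S} (hw : u * w = w) :
    genClosure {w} ⊆ {x : S | u * x = x} := by
  refine genClosure_subset (Set.singleton_subset_iff.mpr hw) ?_ ?_
  · intro a (ha : u * a = a) b (hb : u * b = b)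
    show u * (a + b) = a + b
    rw [hdl, ha, hb]
  · intro a (ha : u * a = a) b _
    show u * (a * b) = a * b
    rw [← mul_assoc, ha]

theorem stmt_17_general {S : Type*} [AddCommSemigroup S] [CommSemigroup S]
    (hdl : ∀ a b c : S, a * (b + c) = a * b + a * c)
    (w : S) (hgen : genClosure {w} = Set.univ)
    (u : S) (hu : w = w * u) :
    ∀ x : S, u * x = x := by
  have hfixed : genClosure {w} ⊆ {x : S | u * x = x} :=
    genClosure_singleton_subset_fixed hdl (by rw [mul_comm, ← hu])
  rw [hgen] at hfixed
  exact fun x => hfixed (Set.mem_univ x)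

theorem stmt_17 {S : Type*} [AddCommSemigroup S] [CommSemigroup S]
    (hdl : ∀ a b c : S, a * (b + c) = a * b + a * c)
    (hdr : ∀ a b c : S, (a + b) * c = a * c + b * c)
    (w : S) (hgen : genClosure {w} = Set.univ)
    (u : S) (hu : w = w * u) :
    ∀ x : S, u * x = x :=
  stmt_17_general hdl w hgen u hu
end
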